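/- Let R be a commutative ring, S a finite set, F a local coefficient system on the Boolean lattice B(S) with values in R-modules, and let ε and ε′ be two sign assignments on B(S). Then the cochain complexes (C^*, d_ε) and (C^*, d_{ε′}) obtained from F using ε and ε′ respectively are isomorphic as cochain complexes of R-modules (there are chain maps in both directions composing to the identity in both orders). -/

import Mathlib

open DirectSum Finset

/-- The cochain group `C^i = ⊕_{A ⊆ S, |A| = i} F(A)` associated to a local
coefficient system `M` on the Boolean lattice of the finite set `S`. -/
abbrev BooleanCochain {R : Type} [CommRing R] {S : Type} [Fintype S] [DecidableEq S]
    (M : Finset S → Type) [∀ A, AddCommGroup (M A)] [∀ A, Module R (M A)] (i : ℕ) : Type :=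
  ⨁ (A : {A : Finset S // A.card = i}), M A.1

/-- The differential `d_ε(v) = Σ_{B covers A} (−1)^{ε(A,B)} d_{A,B}(v)`. -/
noncomputable def booleanDiff {R : Type} [CommRing R] {S : Type} [Fintype S] [DecidableEq S]
    (M : Finset S → Type) [∀ A, AddCommGroup (M A)] [∀ A, Module R (M A)]
    (f : ∀ A B : Finset S, A ⊆ B → (M A →ₗ[R] M B))
    (ε : Finset S → Finset S → ZMod 2) (i : ℕ) :
    BooleanCochain (R := R) M i →ₗ[R] BooleanCochain (R := R) M (i + 1) :=
  DirectSum.toModule R _ _ (fun A =>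
    ∑ c ∈ (A.1ᶜ).attach,
      ((-1 : R) ^ (ε A.1 (insert c.1 A.1)).val) •
        ((DirectSum.lof R {B : Finset S // B.card = i + 1} (fun B => M B.1)
            ⟨insert c.1 A.1, by
              have hc : c.1 ∉ A.1 := Finset.mem_compl.mp c.2
              simp [Finset.card_insert_of_notMem hc, A.2]⟩).comp
          (f A.1 (insert c.1 A.1) (Finset.subset_insert _ _))))

/-! Since every square of `ε` and of `ε'` sums to `1`, every square of `ε + ε'` sums to `0`:
`ε + ε'` is a `ℤ/2`-valued 1-cocycle on the cube, hence (the cube being contractible) a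
coboundary `η(A) + η(B)`, where `η(B)` sums `ε + ε'` along any chain from `∅` to `B`.
Multiplying the summand `F(A)` by `(-1)^η(A)` is then an involution of each cochain group that
intertwines `d_ε` and `d_ε'`. -/

section Potential

variable {S : Type} [DecidableEq S]

def squareSum (δ : Finset S → Finset S → ZMod 2) (A : Finset S) (c₁ c₂ : S) : ZMod 2 :=
  δ A (insert c₁ A) + δ (insert c₁ A) (insert c₂ (insert c₁ A)) +
    δ A (insert c₂ A) + δ (insert c₂ A) (insert c₁ (insert c₂ A))

theorem squareSum_add_eq_zero {ε ε' : Finset S → Finset S → ZMod 2} {A : Finset S} {c₁ c₂ : S}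
    (h : squareSum ε A c₁ c₂ = squareSum ε' A c₁ c₂) : squareSum (ε + ε') A c₁ c₂ = 0 := by
  simp only [squareSum, Pi.add_apply] at h ⊢
  grind

noncomputable def cubePotential (δ : Finset S → Finset S → ZMod 2) : Finset S → ZMod 2 :=
  Finset.strongInduction fun B ih =>
    if h : B.Nonempty then
      ih (B.erase h.choose) (Finset.erase_ssubset h.choose_spec) + δ (B.erase h.choose) B
    else 0

theorem exists_cubePotential_eq (δ : Finset S → Finset S → ZMod 2) {B : Finset S}
    (h : B.Nonempty) :
    ∃ m ∈ B, cubePotential δ B = cubePotential δ (B.erase m) + δ (B.erase m) B :=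
  ⟨h.choose, h.choose_spec, by rw [cubePotential, Finset.strongInduction_eq, dif_pos h]⟩

theorem cubePotential_add_cubePotential_insert {δ : Finset S → Finset S → ZMod 2}
    (hδ : ∀ (A : Finset S) (c₁ c₂ : S), c₁ ∉ A → c₂ ∉ A → c₁ ≠ c₂ → squareSum δ A c₁ c₂ = 0)
    (A : Finset S) {c : S} (hc : c ∉ A) :
    δ A (insert c A) = cubePotential δ A + cubePotential δ (insert c A) := by
  induction A using Finset.strongInduction generalizing c with
  | H A ih =>
    obtain ⟨m, hm, hpot⟩ := exists_cubePotential_eq δ (insert_nonempty c A)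
    rw [hpot]
    by_cases hmc : m = c
    · rw [hmc, erase_insert hc]
      grind
    -- Go around the square spanned by `c` and `m` over `A \ {m}`.
    have hmA : m ∈ A := (mem_insert.mp hm).resolve_left hmc
    have hcA' : c ∉ A.erase m := fun h => hc (mem_of_mem_erase h)
    have hsq := hδ (A.erase m) c m hcA' (notMem_erase m A) (Ne.symm hmc)
    simp only [squareSum] at hsq
    rw [insert_comm, insert_erase hmA] at hsq
    have hside := ih _ (erase_ssubset hmA) hcA'
    have hbase := ih _ (erase_ssubset hmA) (notMem_erase m A)
    rw [insert_erase hmA] at hbase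
    rw [erase_insert_of_ne (Ne.symm hmc)]
    grind

end Potential

theorem neg_one_pow_val_add {R : Type} [Ring R] (x y : ZMod 2) :
    (-1 : R) ^ (x + y).val = (-1) ^ x.val * (-1) ^ y.val := by
  rw [ZMod.val_add, ← pow_add, neg_one_pow_eq_pow_mod_two (x.val + y.val)]

section SignChange

variable {R : Type} [CommRing R] {S : Type} [Fintype S] [DecidableEq S]
  (M : Finset S → Type) [∀ A, AddCommGroup (M A)] [∀ A, Module R (M A)]

noncomputable def signChange (η : Finset S → ZMod 2) (i : ℕ) :
    BooleanCochain (R := R) M i →ₗ[R] BooleanCochain (R := R) M i :=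
  DirectSum.lmap fun A => (-1 : R) ^ (η A.1).val • LinearMap.id

theorem signChange_comp_self (η : Finset S → ZMod 2) (i : ℕ) :
    (signChange (R := R) M η i).comp (signChange M η i) = LinearMap.id := by
  rw [signChange, ← DirectSum.lmap_comp, ← DirectSum.lmap_id]
  congr! 2 with A
  rw [LinearMap.smul_comp, LinearMap.comp_smul, smul_smul, ← mul_pow]
  simp

theorem signChange_comp_booleanDiff (f : ∀ A B : Finset S, A ⊆ B → (M A →ₗ[R] M B))
    {ε ε' : Finset S → Finset S → ZMod 2} {η : Finset S → ZMod 2}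
    (hη : ∀ (A : Finset S) (c : S), c ∉ A →
      ε A (insert c A) + ε' A (insert c A) = η A + η (insert c A)) (i : ℕ) :
    (signChange (R := R) M η (i + 1)).comp (booleanDiff M f ε i) =
      (booleanDiff M f ε' i).comp (signChange M η i) := by
  refine DirectSum.linearMap_ext R fun A => LinearMap.ext fun v => ?_
  simp only [LinearMap.comp_apply, booleanDiff, signChange, DirectSum.toModule_lof,
    DirectSum.lmap_lof, LinearMap.sum_apply, LinearMap.smul_apply, map_sum, map_smul,
    LinearMap.id_apply, Finset.smul_sum]
  refine Finset.sum_congr rfl fun c _ => ?_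
  rw [smul_smul, smul_smul, ← neg_one_pow_val_add, ← neg_one_pow_val_add]
  congr 3
  have := hη A.1 c.1 (Finset.mem_compl.mp c.2)
  grind

end SignChange

theorem booleanComplex_iso_of_two_signAssignments_general
    {R : Type} [CommRing R] {S : Type} [Fintype S] [DecidableEq S]
    (M : Finset S → Type) [∀ A, AddCommGroup (M A)] [∀ A, Module R (M A)]
    (f : ∀ A B : Finset S, A ⊆ B → (M A →ₗ[R] M B))
    (ε ε' : Finset S → Finset S → ZMod 2)
    (hε : ∀ (A : Finset S) (c₁ c₂ : S), c₁ ∉ A → c₂ ∉ A → c₁ ≠ c₂ →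
      ε A (insert c₁ A) + ε (insert c₁ A) (insert c₂ (insert c₁ A)) +
        ε A (insert c₂ A) + ε (insert c₂ A) (insert c₁ (insert c₂ A)) = 1)
    (hε' : ∀ (A : Finset S) (c₁ c₂ : S), c₁ ∉ A → c₂ ∉ A → c₁ ≠ c₂ →
      ε' A (insert c₁ A) + ε' (insert c₁ A) (insert c₂ (insert c₁ A)) +
        ε' A (insert c₂ A) + ε' (insert c₂ A) (insert c₁ (insert c₂ A)) = 1) :
    ∃ (φ ψ : ∀ i : ℕ, BooleanCochain (R := R) M i →ₗ[R] BooleanCochain (R := R) M i),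
      (∀ i : ℕ, (φ (i + 1)).comp (booleanDiff (R := R) M f ε i) =
        (booleanDiff (R := R) M f ε' i).comp (φ i)) ∧
      (∀ i : ℕ, (ψ (i + 1)).comp (booleanDiff (R := R) M f ε' i) =
        (booleanDiff (R := R) M f ε i).comp (ψ i)) ∧
      (∀ i : ℕ, (φ i).comp (ψ i) = LinearMap.id) ∧
      (∀ i : ℕ, (ψ i).comp (φ i) = LinearMap.id) := by
  have hδ : ∀ (A : Finset S) (c₁ c₂ : S), c₁ ∉ A → c₂ ∉ A → c₁ ≠ c₂ →
      squareSum (ε + ε') A c₁ c₂ = 0 := fun A c₁ c₂ h₁ h₂ h₁₂ =>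
    squareSum_add_eq_zero ((hε A c₁ c₂ h₁ h₂ h₁₂).trans (hε' A c₁ c₂ h₁ h₂ h₁₂).symm)
  set η := cubePotential (ε + ε')
  have hη : ∀ (A : Finset S) (c : S), c ∉ A →
      ε A (insert c A) + ε' A (insert c A) = η A + η (insert c A) :=
    fun A _ hc => cubePotential_add_cubePotential_insert hδ A hc
  have hη' : ∀ (A : Finset S) (c : S), c ∉ A →
      ε' A (insert c A) + ε A (insert c A) = η A + η (insert c A) :=
    fun A c hc => (add_comm _ _).trans (hη A c hc)
  exact ⟨signChange M η, signChange M η, signChange_comp_booleanDiff M f hη,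
    signChange_comp_booleanDiff M f hη', signChange_comp_self M η, signChange_comp_self M η⟩

/-- Given a local coefficient system `F` on the Boolean lattice `B(S)` of a finite set `S`
with values in `R`-modules, and two sign assignments `ε`, `ε'`, the resulting cochain
complexes `(C^*, d_ε)` and `(C^*, d_{ε'})` are isomorphic: there are chain maps in both
directions composing to the identity in both orders. -/
theorem booleanComplex_iso_of_two_signAssignments
    {R : Type} [CommRing R] {S : Type} [Fintype S] [DecidableEq S]
    (M : Finset S → Type) [∀ A, AddCommGroup (M A)] [∀ A, Module R (M A)]
    (f : ∀ A B : Finset S, A ⊆ B → (M A →ₗ[R] M B))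
    (f_id : ∀ A, f A A (Finset.Subset.refl A) = LinearMap.id)
    (f_comp : ∀ (A B C : Finset S) (hAB : A ⊆ B) (hBC : B ⊆ C),
      (f B C hBC).comp (f A B hAB) = f A C (hAB.trans hBC))
    (ε ε' : Finset S → Finset S → ZMod 2)
    (hε : ∀ (A : Finset S) (c₁ c₂ : S), c₁ ∉ A → c₂ ∉ A → c₁ ≠ c₂ →
      ε A (insert c₁ A) + ε (insert c₁ A) (insert c₂ (insert c₁ A)) +
        ε A (insert c₂ A) + ε (insert c₂ A) (insert c₁ (insert c₂ A)) = 1)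
    (hε' : ∀ (A : Finset S) (c₁ c₂ : S), c₁ ∉ A → c₂ ∉ A → c₁ ≠ c₂ →
      ε' A (insert c₁ A) + ε' (insert c₁ A) (insert c₂ (insert c₁ A)) +
        ε' A (insert c₂ A) + ε' (insert c₂ A) (insert c₁ (insert c₂ A)) = 1) :
    ∃ (φ ψ : ∀ i : ℕ, BooleanCochain (R := R) M i →ₗ[R] BooleanCochain (R := R) M i),
      (∀ i : ℕ, (φ (i + 1)).comp (booleanDiff (R := R) M f ε i) =
        (booleanDiff (R := R) M f ε' i).comp (φ i)) ∧
      (∀ i : ℕ, (ψ (i + 1)).comp (booleanDiff (R := R) M f ε' i) =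
        (booleanDiff (R := R) M f ε i).comp (ψ i)) ∧
      (∀ i : ℕ, (φ i).comp (ψ i) = LinearMap.id) ∧
      (∀ i : ℕ, (ψ i).comp (φ i) = LinearMap.id) :=
  booleanComplex_iso_of_two_signAssignments_general M f ε ε' hε hε'
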